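/- arXiv:1905.05304 — 2 statements merged into one kernel-verified Lean document; each statement's English description precedes it below -/
import Mathlib

section
/- Let G=(V,E) be a cubic graph with |V|=n and let (H,λ) be the temporal graph obtained from G (and a proper 4-edge-coloring c of G) by the Construction. Let μ_2 be the maximum cardinality of a 2-temporal matching of (H,λ) and let α be the maximum cardinality of an independent set of G. Then μ_2 = α + 3n/2. -/
variable {V : Type*}

/-- The underlying (static) graph of a temporal graph given by its time-labeling. -/
def ugraph (lab : Sym2 V → Finset ℕ) : SimpleGraph V where
  Adj x y := x ≠ y ∧ (lab s(x, y)).Nonempty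
  symm := by
    constructor
    intro x y h
    exact ⟨h.1.symm, by rw [Sym2.eq_swap]; exact h.2⟩
  loopless := by constructor; intro x h; exact h.1 rfl

/-- `(e, t)` is a time edge of the temporal graph given by `lab`. -/
def IsTimeEdge (lab : Sym2 V → Finset ℕ) (p : Sym2 V × ℕ) : Prop :=
  ¬ p.1.IsDiag ∧ p.2 ∈ lab p.1

/-- Two time edges are Δ-independent: edges disjoint or labels at least Δ apart. -/
def DIndep (Δ : ℕ) (p q : Sym2 V × ℕ) : Prop :=
  (∀ v, v ∈ p.1 → v ∉ q.1) ∨ Δ ≤ ((p.2 : ℤ) - (q.2 : ℤ)).natAbs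

/-- A Δ-temporal matching. -/
def IsTM (lab : Sym2 V → Finset ℕ) (Δ : ℕ) (M : Finset (Sym2 V × ℕ)) : Prop :=
  (∀ p ∈ M, IsTimeEdge lab p) ∧ ∀ p ∈ M, ∀ q ∈ M, p ≠ q → DIndep Δ p q

/-- μ_Δ: maximum cardinality of a Δ-temporal matching. -/
noncomputable def tmu (lab : Sym2 V → Finset ℕ) (Δ : ℕ) : ℕ :=
  sSup {k | ∃ M : Finset (Sym2 V × ℕ), IsTM lab Δ M ∧ M.card = k}

/-- The temporal graph has lifetime `T`. -/
def HasLifetime (lab : Sym2 V → Finset ℕ) (T : ℕ) : Prop :=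
  (∀ e, ∀ t ∈ lab e, 1 ≤ t ∧ t ≤ T) ∧ ∃ e : Sym2 V, ¬ e.IsDiag ∧ T ∈ lab e

/-- The snapshot at time `t`. -/
def tsnapshot (lab : Sym2 V → Finset ℕ) (t : ℕ) : SimpleGraph V where
  Adj x y := x ≠ y ∧ t ∈ lab s(x, y)
  symm := by
    constructor
    intro x y h
    exact ⟨h.1.symm, by rw [Sym2.eq_swap]; exact h.2⟩
  loopless := by constructor; intro x h; exact h.1 rfl

/-- 𝒢|_S : keep only time edges with label in `S`. -/
def trestrict (lab : Sym2 V → Finset ℕ) (S : Finset ℕ) : Sym2 V → Finset ℕ :=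
  fun e => lab e ∩ S

/-- A finite matching of a static graph. -/
def IsMatchingF (G : SimpleGraph V) (R : Finset (Sym2 V)) : Prop :=
  (∀ e ∈ R, e ∈ G.edgeSet) ∧ ∀ e ∈ R, ∀ e' ∈ R, e ≠ e' → ∀ v, v ∈ e → v ∉ e'

/-- ν(G): maximum cardinality of a matching. -/
noncomputable def matchNum (G : SimpleGraph V) : ℕ :=
  sSup {k | ∃ R : Finset (Sym2 V), IsMatchingF G R ∧ R.card = k}

/-- An independent set of a static graph. -/
def IsIndepF (G : SimpleGraph V) (S : Finset V) : Prop :=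
  ∀ u ∈ S, ∀ v ∈ S, ¬ G.Adj u v

/-- α(G): maximum cardinality of an independent set. -/
noncomputable def indepNum (G : SimpleGraph V) : ℕ :=
  sSup {k | ∃ S : Finset V, IsIndepF G S ∧ S.card = k}

/-- The Δ-temporal line graph: vertices are the time edges, two distinct time edges are
adjacent iff the edges share a vertex and the labels are less than Δ apart. -/
def tline (lab : Sym2 V → Finset ℕ) (Δ : ℕ) :
    SimpleGraph {p : Sym2 V × ℕ // IsTimeEdge lab p} where
  Adj p q := p ≠ q ∧ (∃ v, v ∈ p.1.1 ∧ v ∈ q.1.1) ∧ ((p.1.2 : ℤ) - (q.1.2 : ℤ)).natAbs < Δ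
  symm := by
    constructor
    rintro p q ⟨hne, ⟨v, hv1, hv2⟩, hlt⟩
    exact ⟨hne.symm, ⟨v, hv2, hv1⟩, by omega⟩
  loopless := by constructor; rintro p ⟨hne, -⟩; exact hne rfl

/-- The side `α ∈ {0,1}` (encoded as a `Bool`) of an edge `e`, determined by
`α ≡ c(e) (mod 2)` where `c(e) ∈ {1,2,3,4}` is the color of `e`. -/
def aV {V : Type*} (c : Sym2 V → ℕ) (e : Sym2 V) : Bool := c e % 2 == 1

/-- The time slot of the two edges incident to `w_e`: 1 if `c(e) ∈ {1,2}`, 3 if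
`c(e) ∈ {3,4}`. -/
def tE {V : Type*} (c : Sym2 V → ℕ) (e : Sym2 V) : ℕ := if c e ≤ 2 then 1 else 3

/-- `c` is a proper 4-edge-coloring of `G` with colors in `{1,2,3,4}`. -/
def ProperEC {V : Type*} (G : SimpleGraph V) (c : Sym2 V → ℕ) : Prop :=
  (∀ e ∈ G.edgeSet, 1 ≤ c e ∧ c e ≤ 4) ∧
  ∀ e ∈ G.edgeSet, ∀ e' ∈ G.edgeSet, e ≠ e' → (∃ v, v ∈ e ∧ v ∈ e') → c e ≠ c e'

/-- The time-labeling `lab` (on the vertex set `(V × Bool) ⊕ Sym2 V`, where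
`(v, false)` plays the role of `v₀`, `(v, true)` of `v₁`, and `Sum.inr e` of `w_e`)
is exactly the temporal graph `(H, λ)` of the Construction applied to `G` and `c`:
every edge `{v₀,v₁}` has label set `{2}`; for every edge `e` of `G` and each endpoint
`u ∈ e`, the edge `{w_e, u_α}` has label set `{tE c e}`; and no other pair carries
any label. -/
def IsConstruction {V : Type*} (G : SimpleGraph V) (c : Sym2 V → ℕ)
    (lab : Sym2 ((V × Bool) ⊕ Sym2 V) → Finset ℕ) : Prop :=
  (∀ v : V, lab s(Sum.inl (v, false), Sum.inl (v, true)) = {2}) ∧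
  (∀ e ∈ G.edgeSet, ∀ u, u ∈ e →
    lab s(Sum.inr e, Sum.inl (u, aV c e)) = {tE c e}) ∧
  (∀ f : Sym2 ((V × Bool) ⊕ Sym2 V), (lab f).Nonempty →
    (∃ v : V, f = s(Sum.inl (v, false), Sum.inl (v, true))) ∨
    (∃ e ∈ G.edgeSet, ∃ u, u ∈ e ∧ f = s(Sum.inr e, Sum.inl (u, aV c e))))

/-!
The time edges of `(H, λ)` are `(v₀v₁, 2)` for `v ∈ V` and the spokes `(w_e u_α, t_e)` with
`t_e ∈ {1, 3}`. Two spokes of the same `e` meet at `w_e` at the same time, and a spoke at `u`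
meets `v₀v₁` for `v = u` one time step apart, so a 2-temporal matching `M` uses at most one spoke
per edge, and only spokes ending outside the set `T` of vertices whose edge `v₀v₁` lies in `M`.
Every edge of `G` inside `T` thus carries no spoke of `M`, and deleting one endpoint per such
edge leaves an independent set: `|M| ≤ |T| + (|E| - e(G[T])) ≤ α(G) + |E|`. Conversely, a maximum
independent set `S` together with one spoke per edge, ending outside `S`, is a 2-temporal
matching: two spokes meeting at a vertex `u_α` at the same time would have colors of the same
parity in the same half of `{1,2,3,4}`, i.e. the same color. Hence `μ₂ = α(G) + |E|`, and
`|E| = 3n/2` for cubic `G`.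
-/

open Finset

section TemporalMatching

variable {W : Type*} {lab : Sym2 W → Finset ℕ} {Δ : ℕ}

lemma DIndep.symm {p q : Sym2 W × ℕ} (h : DIndep Δ p q) : DIndep Δ q p := by
  rcases h with h | h
  · exact Or.inl fun v hq hp => h v hp hq
  · exact Or.inr (by omega)

lemma IsTM.eq_of_mem_of_mem {M : Finset (Sym2 W × ℕ)} (hM : IsTM lab Δ M) {p q : Sym2 W × ℕ}
    (hp : p ∈ M) (hq : q ∈ M) {x : W} (hxp : x ∈ p.1) (hxq : x ∈ q.1)
    (ht : ((p.2 : ℤ) - q.2).natAbs < Δ) : p = q := by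
  by_contra hne
  rcases hM.2 p hp q hq hne with h | h
  · exact h x hxp hxq
  · omega

lemma IsTM.union [DecidableEq W] {A B : Finset (Sym2 W × ℕ)} (hA : IsTM lab Δ A)
    (hB : IsTM lab Δ B) (hAB : ∀ p ∈ A, ∀ q ∈ B, DIndep Δ p q) : IsTM lab Δ (A ∪ B) := by
  refine ⟨fun p hp => (mem_union.1 hp).elim (hA.1 p) (hB.1 p), fun p hp q hq hne => ?_⟩
  rcases mem_union.1 hp with hp | hp <;> rcases mem_union.1 hq with hq | hq
  exacts [hA.2 p hp q hq hne, hAB p hp q hq, (hAB q hq p hp).symm, hB.2 p hp q hq hne]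

lemma isTM_image [DecidableEq W] {ι : Type*} {s : Finset ι} {f : ι → Sym2 W × ℕ}
    (hf : ∀ i ∈ s, IsTimeEdge lab (f i))
    (hpair : ∀ i ∈ s, ∀ j ∈ s, i ≠ j → DIndep Δ (f i) (f j)) : IsTM lab Δ (s.image f) := by
  refine ⟨by simpa using hf, ?_⟩
  simp only [mem_image]
  rintro _ ⟨i, hi, rfl⟩ _ ⟨j, hj, rfl⟩ hne
  exact hpair i hi j hj fun h => hne (h ▸ rfl)

lemma tmu_eq_of_forall_card_le {k : ℕ} (hex : ∃ M, IsTM lab Δ M ∧ #M = k)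
    (hle : ∀ M, IsTM lab Δ M → #M ≤ k) : tmu lab Δ = k := by
  refine IsGreatest.csSup_eq ⟨hex, ?_⟩
  rintro _ ⟨M, hM, rfl⟩
  exact hle M hM

end TemporalMatching

section Independent

variable {G : SimpleGraph V}

lemma IsIndepF.exists_notMem_of_mem_edgeSet {S : Finset V} (hS : IsIndepF G S) {e : Sym2 V}
    (he : e ∈ G.edgeSet) : ∃ u ∈ e, u ∉ S := by
  induction e using Sym2.ind with
  | h a b =>
    by_contra! h
    exact hS a (h a (Sym2.mem_mk_left a b)) b (h b (Sym2.mem_mk_right a b)) he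

variable [Fintype V]

lemma bddAbove_card_isIndepF (G : SimpleGraph V) :
    BddAbove {k | ∃ S : Finset V, IsIndepF G S ∧ #S = k} :=
  ⟨Fintype.card V, by rintro _ ⟨S, -, rfl⟩; exact S.card_le_univ⟩

lemma IsIndepF.card_le_indepNum {S : Finset V} (hS : IsIndepF G S) : #S ≤ indepNum G :=
  le_csSup (bddAbove_card_isIndepF G) ⟨S, hS, rfl⟩

lemma exists_isIndepF_card_eq_indepNum (G : SimpleGraph V) :
    ∃ S : Finset V, IsIndepF G S ∧ #S = indepNum G :=
  Nat.sSup_mem (s := {k | ∃ S : Finset V, IsIndepF G S ∧ #S = k}) ⟨0, ∅, by simp [IsIndepF]⟩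
    (bddAbove_card_isIndepF G)

lemma card_le_indepNum_add [DecidableEq V] (T : Finset V) (F : Finset (Sym2 V))
    (hF : ∀ u ∈ T, ∀ v ∈ T, G.Adj u v → s(u, v) ∈ F) : #T ≤ indepNum G + #F := by
  induction T using Finset.strongInduction generalizing F with
  | H T ih =>
    by_cases hT : IsIndepF G T
    · exact hT.card_le_indepNum.trans (Nat.le_add_right _ _)
    obtain ⟨u, hu, v, hv, huv⟩ : ∃ u ∈ T, ∃ v ∈ T, G.Adj u v := by
      simpa [IsIndepF] using hT
    have hF' : ∀ x ∈ T.erase u, ∀ y ∈ T.erase u, G.Adj x y → s(x, y) ∈ F.erase s(u, v) := by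
      intro x hx y hy hxy
      refine mem_erase.2 ⟨fun h => ?_, hF x (mem_of_mem_erase hx) y (mem_of_mem_erase hy) hxy⟩
      have : u ∈ s(x, y) := h ▸ Sym2.mem_mk_left u v
      rcases Sym2.mem_iff.1 this with rfl | rfl
      exacts [notMem_erase u T hx, notMem_erase u T hy]
    have := ih _ (erase_ssubset hu) _ hF'
    rw [card_erase_of_mem hu, card_erase_of_mem (hF u hu v hv huv)] at this
    have := card_pos.2 ⟨u, hu⟩
    have := card_pos.2 ⟨_, hF u hu v hv huv⟩
    omega

end Independent

lemma SimpleGraph.IsRegularOfDegree.mul_card_eq_two_mul_card_edgeFinset [Fintype V]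
    {G : SimpleGraph V} [DecidableRel G.Adj] {k : ℕ} (hG : G.IsRegularOfDegree k) :
    k * Fintype.card V = 2 * #G.edgeFinset := by
  classical
  simp [← G.sum_degrees_eq_twice_card_edges, hG.degree_eq, mul_comm]

section Construction

variable {G : SimpleGraph V} {c : Sym2 V → ℕ}

abbrev HVertex (V : Type*) := (V × Bool) ⊕ Sym2 V

abbrev vertexTE (v : V) : Sym2 (HVertex V) × ℕ := (s(Sum.inl (v, false), Sum.inl (v, true)), 2)

abbrev spokeTE (c : Sym2 V → ℕ) (e : Sym2 V) (u : V) : Sym2 (HVertex V) × ℕ :=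
  (s(Sum.inr e, Sum.inl (u, aV c e)), tE c e)

lemma tE_eq_one_or_three (c : Sym2 V → ℕ) (e : Sym2 V) : tE c e = 1 ∨ tE c e = 3 := by
  unfold tE; split <;> simp

lemma vertexTE_injective : Function.Injective (vertexTE (V := V)) := by
  intro v w h
  simpa using h

lemma spokeTE_ne_vertexTE (e : Sym2 V) (u v : V) : spokeTE c e u ≠ vertexTE v := by
  simp

lemma ProperEC.aV_ne (hc : ProperEC G c) {e e' : Sym2 V} (he : e ∈ G.edgeSet)
    (he' : e' ∈ G.edgeSet) (hne : e ≠ e') {u : V} (hu : u ∈ e) (hu' : u ∈ e')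
    (ht : tE c e = tE c e') : aV c e ≠ aV c e' := by
  have hcol := hc.2 e he e' he' hne ⟨u, hu, hu'⟩
  have := hc.1 e he
  have := hc.1 e' he'
  unfold tE at ht
  simp only [aV, ne_eq, beq_eq_beq]
  split_ifs at ht <;> omega

variable {lab : Sym2 (HVertex V) → Finset ℕ}

lemma IsConstruction.isTimeEdge_iff (hcons : IsConstruction G c lab) {p : Sym2 (HVertex V) × ℕ} :
    IsTimeEdge lab p ↔
      (∃ v, p = vertexTE v) ∨ ∃ e ∈ G.edgeSet, ∃ u ∈ e, p = spokeTE c e u := by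
  constructor
  · rintro ⟨-, ht⟩
    rcases hcons.2.2 p.1 ⟨p.2, ht⟩ with ⟨v, hv⟩ | ⟨e, he, u, hu, hf⟩
    · rw [hv, hcons.1 v, mem_singleton] at ht
      exact Or.inl ⟨v, Prod.ext hv ht⟩
    · rw [hf, hcons.2.1 e he u hu, mem_singleton] at ht
      exact Or.inr ⟨e, he, u, hu, Prod.ext hf ht⟩
  · rintro (⟨v, rfl⟩ | ⟨e, he, u, hu, rfl⟩)
    · exact ⟨by simp, by simp [hcons.1 v]⟩
    · exact ⟨by simp, by simp [hcons.2.1 e he u hu]⟩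

lemma IsTM.eq_of_spokeTE_mem {M : Finset (Sym2 (HVertex V) × ℕ)} (hM : IsTM lab 2 M)
    {e : Sym2 V} {u u' : V} (hu : spokeTE c e u ∈ M) (hu' : spokeTE c e u' ∈ M) : u = u' := by
  simpa using hM.eq_of_mem_of_mem hu hu' (Sym2.mem_mk_left _ _) (Sym2.mem_mk_left _ _) (by simp)

lemma IsTM.vertexTE_notMem_of_spokeTE_mem {M : Finset (Sym2 (HVertex V) × ℕ)}
    (hM : IsTM lab 2 M) {e : Sym2 V} {u : V} (hu : spokeTE c e u ∈ M) : vertexTE u ∉ M := by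
  intro hv
  refine spokeTE_ne_vertexTE e u u (hM.eq_of_mem_of_mem hu hv (Sym2.mem_mk_right _ _)
    (by cases aV c e <;> simp) ?_)
  rcases tE_eq_one_or_three c e with h | h <;> simp [h]

lemma IsConstruction.card_le_of_isTM [Fintype V] [DecidableEq V] [DecidableRel G.Adj]
    (hcons : IsConstruction G c lab) {M : Finset (Sym2 (HVertex V) × ℕ)} (hM : IsTM lab 2 M) :
    #M ≤ indepNum G + #G.edgeFinset := by
  classical
  set T : Finset V := univ.filter fun v => vertexTE v ∈ M
  set P := (G.edgeFinset ×ˢ univ).filter fun eu => eu.2 ∈ eu.1 ∧ spokeTE c eu.1 eu.2 ∈ M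
  have hsub : M ⊆ T.image vertexTE ∪ P.image fun eu => spokeTE c eu.1 eu.2 := by
    intro p hp
    rcases hcons.isTimeEdge_iff.1 (hM.1 p hp) with ⟨v, rfl⟩ | ⟨e, he, u, hu, rfl⟩
    · exact mem_union_left _ (mem_image_of_mem _ (by simpa [T] using hp))
    · exact mem_union_right _ (mem_image.2 ⟨(e, u), by simpa [P, he, hu] using hp, rfl⟩)
  have hinj : Set.InjOn Prod.fst (P : Set (Sym2 V × V)) := by
    rintro ⟨e, u⟩ hu ⟨e', u'⟩ hu' (rfl : e = e')
    simp only [coe_filter, Set.mem_ofPred_eq, P] at hu hu'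
    rw [hM.eq_of_spokeTE_mem hu.2.2 hu'.2.2]
  have hout : ∀ eu ∈ P, eu.2 ∉ T := fun eu heu huT =>
    hM.vertexTE_notMem_of_spokeTE_mem (mem_filter.1 heu).2.2 (mem_filter.1 huT).2
  have hT : #T ≤ indepNum G + #(G.edgeFinset \ P.image Prod.fst) := by
    refine card_le_indepNum_add T _ fun u hu v hv huv => mem_sdiff.2 ⟨by simpa, ?_⟩
    intro h
    obtain ⟨⟨e, w⟩, hw, rfl : e = s(u, v)⟩ := mem_image.1 h
    have hwe : w ∈ s(u, v) := (mem_filter.1 hw).2.1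
    rcases Sym2.mem_iff.1 hwe with rfl | rfl
    exacts [hout _ hw hu, hout _ hw hv]
  have hP : P.image Prod.fst ⊆ G.edgeFinset := fun e he => by
    obtain ⟨eu, heu, rfl⟩ := mem_image.1 he
    exact (mem_product.1 (mem_filter.1 heu).1).1
  calc #M ≤ #T + #P :=
        (card_le_card hsub).trans <| (card_union_le _ _).trans <|
          add_le_add card_image_le card_image_le
    _ = #T + #(P.image Prod.fst) := by rw [card_image_of_injOn hinj]
    _ ≤ indepNum G + #G.edgeFinset := by
        have := card_sdiff_add_card_eq_card hP
        omega

lemma dIndep_vertexTE_vertexTE {Δ : ℕ} {v w : V} (h : v ≠ w) :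
    DIndep Δ (vertexTE v) (vertexTE w) :=
  Or.inl (by simp [h])

lemma dIndep_vertexTE_spokeTE {Δ : ℕ} {v u : V} (h : v ≠ u) (e : Sym2 V) :
    DIndep Δ (vertexTE v) (spokeTE c e u) :=
  Or.inl (by simp [h])

lemma ProperEC.dIndep_spokeTE (hc : ProperEC G c) {e e' : Sym2 V} (he : e ∈ G.edgeSet)
    (he' : e' ∈ G.edgeSet) (hne : e ≠ e') {u u' : V} (hu : u ∈ e) (hu' : u' ∈ e') :
    DIndep 2 (spokeTE c e u) (spokeTE c e' u') := by
  by_cases ht : tE c e = tE c e'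
  · refine Or.inl fun x hx hx' => ?_
    simp only [Sym2.mem_iff] at hx hx'
    rcases hx with rfl | rfl <;> simp only [Sum.inl.injEq, Sum.inr.injEq, Prod.mk.injEq,
      reduceCtorEq, false_or, or_false] at hx'
    · exact hne hx'
    · exact hc.aV_ne he he' hne hu (hx'.1 ▸ hu') ht hx'.2
  · refine Or.inr ?_
    rcases tE_eq_one_or_three c e with h | h <;>
      rcases tE_eq_one_or_three c e' with h' | h' <;> simp_all

lemma IsConstruction.exists_isTM_card_eq [Fintype V] [DecidableEq V] [DecidableRel G.Adj]
    (hc : ProperEC G c) (hcons : IsConstruction G c lab) {S : Finset V} (hS : IsIndepF G S) :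
    ∃ M : Finset (Sym2 (HVertex V) × ℕ), IsTM lab 2 M ∧ #M = #S + #G.edgeFinset := by
  choose pick hpick hpickS using fun e : G.edgeSet => hS.exists_notMem_of_mem_edgeSet e.2
  have hvertex : IsTM lab 2 (S.image vertexTE) :=
    isTM_image (fun v _ => hcons.isTimeEdge_iff.2 (Or.inl ⟨v, rfl⟩))
      fun _ _ _ _ hvw => dIndep_vertexTE_vertexTE hvw
  have hspoke : IsTM lab 2 (univ.image fun e : G.edgeSet => spokeTE c e (pick e)) :=
    isTM_image (fun e _ => hcons.isTimeEdge_iff.2 (Or.inr ⟨e, e.2, _, hpick e, rfl⟩))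
      fun e _ e' _ hne => hc.dIndep_spokeTE e.2 e'.2 (Subtype.coe_ne_coe.2 hne) (hpick e) (hpick e')
  have hcross : ∀ p ∈ S.image vertexTE,
      ∀ q ∈ univ.image fun e : G.edgeSet => spokeTE c e (pick e), DIndep 2 p q := by
    simp only [mem_image, mem_univ, true_and]
    rintro _ ⟨v, hv, rfl⟩ _ ⟨e, rfl⟩
    exact dIndep_vertexTE_spokeTE (fun h : v = pick e => hpickS e (h ▸ hv)) e
  refine ⟨_, hvertex.union hspoke hcross, ?_⟩
  rw [card_union_of_disjoint, card_image_of_injective _ vertexTE_injective,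
    card_image_of_injective, card_univ, ← G.edgeFinset_card]
  · intro e e' h
    exact Subtype.ext (by simpa using congrArg (fun p => Sum.inr (e : Sym2 V) ∈ p.1) h)
  · simp only [disjoint_left, mem_image, mem_univ, true_and, not_exists]
    rintro _ ⟨v, -, rfl⟩ e h
    exact spokeTE_ne_vertexTE _ _ v h

end Construction

theorem stmt6_general {V : Type*} [Fintype V]
    (G : SimpleGraph V) [DecidableRel G.Adj] (hcubic : ∀ v : V, G.degree v = 3)
    (c : Sym2 V → ℕ) (hc : ProperEC G c)
    (lab : Sym2 ((V × Bool) ⊕ Sym2 V) → Finset ℕ) (hcons : IsConstruction G c lab) :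
    2 * tmu lab 2 = 2 * indepNum G + 3 * Fintype.card V := by
  classical
  obtain ⟨S, hS, hScard⟩ := exists_isIndepF_card_eq_indepNum G
  have hμ : tmu lab 2 = indepNum G + #G.edgeFinset :=
    tmu_eq_of_forall_card_le (hScard ▸ hcons.exists_isTM_card_eq hc hS)
      fun _ hM => hcons.card_le_of_isTM hM
  have hedges := SimpleGraph.IsRegularOfDegree.mul_card_eq_two_mul_card_edgeFinset hcubic
  omega

/-- For a cubic graph `G` on `n` vertices with a proper 4-edge-coloring `c`
and the temporal graph `(H,λ)` of the Construction, `μ₂(H,λ) = α(G) + 3n/2`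
(stated multiplied by 2 to avoid division). -/
theorem stmt6 {V : Type*} [Fintype V] [DecidableEq V]
    (G : SimpleGraph V) [DecidableRel G.Adj] (hcubic : ∀ v : V, G.degree v = 3)
    (c : Sym2 V → ℕ) (hc : ProperEC G c)
    (lab : Sym2 ((V × Bool) ⊕ Sym2 V) → Finset ℕ) (hcons : IsConstruction G c lab) :
    2 * tmu lab 2 = 2 * indepNum G + 3 * Fintype.card V :=
  stmt6_general G hcubic c hc lab hcons
end

section
/- Let Z' be a connected induced subgraph of the diagonal grid graph Z^D_{n−1,T}. Then there exist a natural number n' ≤ n and a time-labeling λ of the edges of the path P_{n'} with labels in [T] such that Z' is isomorphic to the 2-temporal line graph L_2((P_{n'}, λ)). -/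
variable {V : Type*}

/-- The diagonal grid graph (king's graph) `Z^D_{n,m}` on vertex set `Fin n × Fin m`:
`v_{i,j}` and `v_{i',j'}` are adjacent iff they are distinct and
`|i-i'|² + |j-j'|² ≤ 2`. -/
def diagGrid (n m : ℕ) : SimpleGraph (Fin n × Fin m) where
  Adj p q := p ≠ q ∧ ((p.1 : ℤ) - (q.1 : ℤ)) ^ 2 + ((p.2 : ℤ) - (q.2 : ℤ)) ^ 2 ≤ 2
  symm := by
    constructor
    intro p q h
    refine ⟨h.1.symm, ?_⟩
    have heq : ((q.1 : ℤ) - (p.1 : ℤ)) ^ 2 + ((q.2 : ℤ) - (p.2 : ℤ)) ^ 2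
        = ((p.1 : ℤ) - (q.1 : ℤ)) ^ 2 + ((p.2 : ℤ) - (q.2 : ℤ)) ^ 2 := by ring
    rw [heq]; exact h.2
  loopless := by constructor; intro p h; exact h.1 rfl

/-! The columns met by a connected induced subgraph `S` of the king's graph form an interval
`[a, a + k]`, so the grid vertex `(i, j)` can be sent to the time edge `({i - a, i - a + 1}, j + 1)`
of the path `P_{k+2}` and every edge of the path receives a label. Two edges of a path meet iff
their indices differ by at most one, and `L_2` asks the labels to differ by at most one as well:
this is exactly adjacency in the king's graph. -/

section PathEdge

variable {k : ℕ}

def pathEdge (i : Fin (k + 1)) : Sym2 (Fin (k + 2)) := s(i.castSucc, i.succ)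

lemma pathEdge_not_isDiag (i : Fin (k + 1)) : ¬ (pathEdge i).IsDiag := by
  simp [pathEdge, Fin.ext_iff]

lemma pathEdge_injective : Function.Injective (pathEdge (k := k)) := by
  intro i j h
  rw [pathEdge, pathEdge, Sym2.eq_iff] at h
  simp only [Fin.ext_iff, Fin.val_castSucc, Fin.val_succ] at h
  ext
  omega

lemma exists_pathEdge_eq_iff {u v : Fin (k + 2)} :
    (∃ i, pathEdge i = s(u, v)) ↔ (SimpleGraph.pathGraph (k + 2)).Adj u v := by
  rw [SimpleGraph.pathGraph_adj]
  constructor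
  · rintro ⟨i, h⟩
    rw [pathEdge, Sym2.eq_iff] at h
    simp only [Fin.ext_iff, Fin.val_castSucc, Fin.val_succ] at h
    omega
  · rintro (h | h)
    · exact ⟨⟨u, by omega⟩, by simp [pathEdge, h]⟩
    · exact ⟨⟨v, by omega⟩, by rw [Sym2.eq_swap]; simp [pathEdge, h]⟩

lemma exists_mem_pathEdge_iff {i j : Fin (k + 1)} :
    (∃ v, v ∈ pathEdge i ∧ v ∈ pathEdge j) ↔ ((i : ℤ) - j).natAbs ≤ 1 := by
  simp only [pathEdge, Sym2.mem_iff, Fin.ext_iff, Fin.val_castSucc, Fin.val_succ]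
  constructor
  · rintro ⟨v, hi, hj⟩
    omega
  · intro h
    exact ⟨⟨max i j, by omega⟩, by simp only; omega, by simp only; omega⟩

end PathEdge

section PathLabel

variable {α : Type*} [Fintype α] {k : ℕ} (col : α → Fin (k + 1)) (time : α → ℕ)

/-- The temporal path in which every `x : α` becomes the time edge `(pathEdge (col x), time x)`. -/
def pathLabel (e : Sym2 (Fin (k + 2))) : Finset ℕ :=
  ({x | pathEdge (col x) = e} : Finset α).image time

variable {col time}

lemma mem_pathLabel {e : Sym2 (Fin (k + 2))} {t : ℕ} :
    t ∈ pathLabel col time e ↔ ∃ x, pathEdge (col x) = e ∧ time x = t := by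
  simp [pathLabel]

lemma ugraph_pathLabel (hcol : Function.Surjective col) :
    ugraph (pathLabel col time) = SimpleGraph.pathGraph (k + 2) := by
  ext u v
  rw [← exists_pathEdge_eq_iff]
  refine ⟨fun ⟨_, t, ht⟩ => ?_, fun ⟨i, hi⟩ => ?_⟩
  · obtain ⟨x, hx, -⟩ := mem_pathLabel.mp ht
    exact ⟨col x, hx⟩
  · obtain ⟨x, rfl⟩ := hcol i
    refine ⟨fun huv => pathEdge_not_isDiag (col x) ?_, time x, mem_pathLabel.mpr ⟨x, hi, rfl⟩⟩
    rw [hi, huv, Sym2.mk_isDiag_iff]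

variable (col time) in
def toTimeEdge (x : α) : {p // IsTimeEdge (pathLabel col time) p} :=
  ⟨(pathEdge (col x), time x), pathEdge_not_isDiag _, mem_pathLabel.mpr ⟨x, rfl, rfl⟩⟩

lemma toTimeEdge_bijective (hinj : Function.Injective fun x => (col x, time x)) :
    Function.Bijective (toTimeEdge col time) := by
  refine ⟨fun x y hxy => hinj ?_, fun ⟨⟨e, t⟩, _, ht⟩ => ?_⟩
  · have h := congrArg Subtype.val hxy
    simp only [toTimeEdge, Prod.mk.injEq] at h
    exact Prod.ext (pathEdge_injective h.1) h.2
  · obtain ⟨x, rfl, rfl⟩ := mem_pathLabel.mp ht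
    exact ⟨x, rfl⟩

lemma tline_adj_toTimeEdge (hinj : Function.Injective fun x => (col x, time x)) {x y : α} :
    (tline (pathLabel col time) 2).Adj (toTimeEdge col time x) (toTimeEdge col time y) ↔
      x ≠ y ∧ ((col x : ℤ) - col y).natAbs ≤ 1 ∧ ((time x : ℤ) - time y).natAbs ≤ 1 := by
  change toTimeEdge col time x ≠ toTimeEdge col time y ∧
    (∃ v, v ∈ pathEdge (col x) ∧ v ∈ pathEdge (col y)) ∧ ((time x : ℤ) - time y).natAbs < 2 ↔ _
  rw [(toTimeEdge_bijective hinj).injective.ne_iff, exists_mem_pathEdge_iff]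
  exact and_congr_right' (and_congr_right' (by omega))

end PathLabel

lemma SimpleGraph.Walk.exists_mem_support_eq {G : SimpleGraph V} {f : V → ℕ}
    (hf : ∀ u v, G.Adj u v → f v ≤ f u + 1) {x y : V} (w : G.Walk x y) {c : ℕ}
    (hxc : f x ≤ c) (hcy : c ≤ f y) : ∃ z ∈ w.support, f z = c := by
  induction w with
  | nil => exact ⟨_, Walk.start_mem_support _, by omega⟩
  | @cons u v _ huv w ih =>
    by_cases hc : f u = c
    · exact ⟨u, Walk.start_mem_support _, hc⟩
    · obtain ⟨z, hz, rfl⟩ := ih (by have := hf u v huv; omega) hcy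
      exact ⟨z, List.mem_cons_of_mem _ hz, rfl⟩

lemma Int.sq_add_sq_le_two_iff {x y : ℤ} : x ^ 2 + y ^ 2 ≤ 2 ↔ x.natAbs ≤ 1 ∧ y.natAbs ≤ 1 := by
  constructor
  · intro h
    have hx : -1 ≤ x ∧ x ≤ 1 := by constructor <;> nlinarith [sq_nonneg y]
    have hy : -1 ≤ y ∧ y ≤ 1 := by constructor <;> nlinarith [sq_nonneg x]
    omega
  · rintro ⟨hx, hy⟩
    have hx : -1 ≤ x ∧ x ≤ 1 := by omega
    have hy : -1 ≤ y ∧ y ≤ 1 := by omega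
    nlinarith

lemma diagGrid_adj_iff {m T : ℕ} {p q : Fin m × Fin T} :
    (diagGrid m T).Adj p q ↔
      p ≠ q ∧ ((p.1 : ℤ) - q.1).natAbs ≤ 1 ∧ ((p.2 : ℤ) - q.2).natAbs ≤ 1 :=
  and_congr_right' Int.sq_add_sq_le_two_iff

lemma exists_mem_fst_eq_of_connected {m T : ℕ} {S : Set (Fin m × Fin T)}
    (hconn : ((diagGrid m T).induce S).Connected) {p q : Fin m × Fin T} (hp : p ∈ S)
    (hq : q ∈ S) {c : ℕ} (hpc : p.1 ≤ c) (hcq : c ≤ q.1) : ∃ r ∈ S, (r.1 : ℕ) = c := by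
  obtain ⟨w⟩ := hconn.preconnected ⟨p, hp⟩ ⟨q, hq⟩
  have hstep : ∀ u v : S, ((diagGrid m T).induce S).Adj u v → (v.1.1 : ℕ) ≤ u.1.1 + 1 := by
    intro u v huv
    have := (diagGrid_adj_iff.mp (SimpleGraph.induce_adj.mp huv)).2.1
    omega
  obtain ⟨r, -, hr⟩ := w.exists_mem_support_eq hstep hpc hcq
  exact ⟨r, r.2, hr⟩

lemma exists_pathLabel_iso_diagGrid_induce {m T : ℕ} {S : Set (Fin m × Fin T)} {a k : ℕ}
    (hS : ∀ p ∈ S, a ≤ p.1 ∧ (p.1 : ℕ) ≤ a + k)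
    (hcover : ∀ i ≤ k, ∃ p ∈ S, (p.1 : ℕ) = a + i) :
    ∃ lab : Sym2 (Fin (k + 2)) → Finset ℕ,
      ugraph lab = SimpleGraph.pathGraph (k + 2) ∧
      (∀ e, ∀ t ∈ lab e, t ∈ Finset.Icc 1 T) ∧
      Nonempty ((diagGrid m T).induce S ≃g tline lab 2) := by
  classical
  let col (p : S) : Fin (k + 1) := ⟨p.1.1 - a, by have := hS p p.2; omega⟩
  let time (p : S) : ℕ := p.1.2 + 1
  have hcol : Function.Surjective col := by
    intro i
    obtain ⟨p, hp, hpi⟩ := hcover i (by omega)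
    exact ⟨⟨p, hp⟩, Fin.ext (by simp only [col]; omega)⟩
  have hinj : Function.Injective fun p => (col p, time p) := by
    intro p q hpq
    simp only [Prod.mk.injEq, Fin.ext_iff, col, time] at hpq
    have := hS p p.2
    have := hS q q.2
    ext <;> omega
  refine ⟨pathLabel col time, ugraph_pathLabel hcol, fun e t ht => ?_,
    ⟨Equiv.ofBijective _ (toTimeEdge_bijective hinj), fun {p q} => ?_⟩⟩
  · obtain ⟨p, -, rfl⟩ := mem_pathLabel.mp ht
    simp [time]
  · simp only [Equiv.ofBijective_apply]
    rw [tline_adj_toTimeEdge hinj, SimpleGraph.induce_adj, diagGrid_adj_iff]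
    simp only [col, time, ne_eq, Subtype.ext_iff]
    push_cast [Nat.cast_sub (hS p p.2).1, Nat.cast_sub (hS q q.2).1]
    rw [sub_sub_sub_cancel_right, add_sub_add_right_eq_sub]

/-- Every connected induced subgraph `Z'` of the diagonal grid graph
`Z^D_{n-1,T}` is the 2-temporal line graph of a temporal graph whose underlying graph
is a path `P_{n'}` with `n' ≤ n` and whose labels lie in `[T]`. -/
theorem stmt9 (n T : ℕ) (S : Set (Fin (n - 1) × Fin T))
    (hconn : ((diagGrid (n - 1) T).induce S).Connected) :
    ∃ n', n' ≤ n ∧ ∃ lab : Sym2 (Fin n') → Finset ℕ,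
      ugraph lab = SimpleGraph.pathGraph n' ∧
      (∀ e, ∀ t ∈ lab e, t ∈ Finset.Icc 1 T) ∧
      Nonempty ((diagGrid (n - 1) T).induce S ≃g tline lab 2) := by
  obtain ⟨⟨p₀, hp₀⟩⟩ := hconn.nonempty
  obtain ⟨pa, hpa, hmin⟩ : ∃ pa ∈ S, ∀ p ∈ S, (pa.1 : ℕ) ≤ p.1 :=
    S.exists_min_image (fun p => (p.1 : ℕ)) S.toFinite ⟨p₀, hp₀⟩
  obtain ⟨pb, hpb, hmax⟩ : ∃ pb ∈ S, ∀ p ∈ S, (p.1 : ℕ) ≤ pb.1 :=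
    S.exists_max_image (fun p => (p.1 : ℕ)) S.toFinite ⟨p₀, hp₀⟩
  have hab := hmin pb hpb
  obtain ⟨lab, hpath, hlab, hiso⟩ := exists_pathLabel_iso_diagGrid_induce (k := pb.1 - pa.1)
    (fun p hp => ⟨hmin p hp, by have := hmax p hp; omega⟩)
    (fun i hi => exists_mem_fst_eq_of_connected hconn hpa hpb (by omega) (by omega))
  exact ⟨_, by have := pb.1.isLt; omega, lab, hpath, hlab, hiso⟩
end
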